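/- Let t > 1 and pi the distribution on s-colored Motzkin paths of length 2n proportional to t^(2A(x)). Let B be the set of paths having an up step at height zero in position n or a down step reaching height zero in position n+1. Then for all sufficiently large n, pi(B) < t^(-n^2/3). -/

import Mathlib

/-!
The single peak path has area n², so π(B) ≤ |Ω| · t^(2 max_B A - 2n²). A path that returns to
height 0 at position m lies below the tents over [0, m] and [m, 2n], so twice its area is at most
(m² + (2n - m)²)/2, which is n² + 1 for m = n ± 1. With |Ω| ≤ (2s+1)^(2n) this gives
π(B) ≤ (2s+1)^(2n) t^(1 - n²), eventually below t^(-n²/3).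
-/

/-- A step of an `s`-colored Motzkin path: an up step with a color,
a flat step, or a down step with a color. -/
inductive MStep (s : ℕ) : Type
  | up (c : Fin s) : MStep s
  | flat : MStep s
  | down (c : Fin s) : MStep s
  deriving DecidableEq

/-- Height change of a step. -/
def MStep.h {s : ℕ} : MStep s → ℤ
  | .up _ => 1
  | .flat => 0
  | .down _ => -1

/-- Height of the path `x` after `j` steps. -/
def height {s : ℕ} (x : List (MStep s)) (j : ℕ) : ℤ :=
  ((x.take j).map MStep.h).sum

/-- Stack-based checker: `isMotzkinAux stack x` holds iff, starting with the
stack of colors of currently unmatched up steps, the list `x` stays weakly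
above the axis, ends with an empty stack (height 0), and every down step
carries the color of its matching up step. -/
def isMotzkinAux {s : ℕ} : List (Fin s) → List (MStep s) → Prop
  | stack, [] => stack = []
  | stack, (MStep.up c) :: rest => isMotzkinAux (c :: stack) rest
  | stack, MStep.flat :: rest => isMotzkinAux stack rest
  | [], (MStep.down _) :: _ => False
  | (c :: stack), (MStep.down c') :: rest => c = c' ∧ isMotzkinAux stack rest

/-- `x` is an `s`-colored Motzkin path (of its own length): it goes from
height 0 to height 0, never below the axis, with matched colors. -/
def isMotzkin {s : ℕ} (x : List (MStep s)) : Prop := isMotzkinAux [] x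

/-- Twice the area between the path and the x-axis. -/
def area2 {s : ℕ} (x : List (MStep s)) : ℤ :=
  ∑ j ∈ Finset.range x.length, (height x j + height x (j + 1))

/-- The area between the path and the x-axis: a flat step at height `h`
contributes `h`, an up/down step between heights `h` and `h+1` contributes
`h + 1/2`. -/
def area {s : ℕ} (x : List (MStep s)) : ℚ := (area2 x : ℚ) / 2

/-- The set of s-colored Motzkin paths of length 2n. -/
def Omega (s n : ℕ) : Set (List (MStep s)) := {x | isMotzkin x ∧ x.length = 2 * n}

/-- The π-probability (for the distribution proportional to t^(2·area x))
of a set S of s-colored Motzkin paths of length 2n. -/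
noncomputable def piOf (s n : ℕ) (t : ℝ) (S : Set (List (MStep s))) : ℝ :=
  (∑ᶠ x ∈ S ∩ Omega s n, t ^ area2 x) / (∑ᶠ x ∈ Omega s n, t ^ area2 x)

/-- The set of non-prime paths: those touching height 0 at some intermediate
position. -/
def nonPrime (s n : ℕ) : Set (List (MStep s)) :=
  {x | ∃ j, 1 < j ∧ j < 2 * n ∧ height x j = 0}

/-- The bottleneck: paths with an up step at height zero in position n, or a
down step reaching height zero in position n+1. -/
def bottleneck (s n : ℕ) : Set (List (MStep s)) :=
  {x | (∃ c, x[n - 1]? = some (MStep.up c) ∧ height x (n - 1) = 0) ∨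
       (∃ c, x[n]? = some (MStep.down c) ∧ height x (n + 1) = 0)}

def tentSum (m : ℕ) : ℕ := ∑ j ∈ Finset.range (m + 1), min j (m - j)

lemma tentSum_add_two (m : ℕ) : tentSum (m + 2) = tentSum m + (m + 1) := by
  unfold tentSum
  rw [Finset.sum_range_succ', Finset.sum_range_succ]
  have hshift : ∀ i ∈ Finset.range (m + 1),
      min (i + 1) (m + 2 - (i + 1)) = min i (m - i) + 1 := by
    intro i hi
    rw [Finset.mem_range] at hi
    omega
  rw [Finset.sum_congr rfl hshift, Finset.sum_add_distrib]
  simp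

lemma four_mul_tentSum_le (m : ℕ) : 4 * tentSum m ≤ m ^ 2 := by
  induction m using Nat.twoStepInduction with
  | zero => decide
  | one => decide
  | more m ih _ =>
    rw [tentSum_add_two]
    nlinarith

lemma tentSum_two_mul (n : ℕ) : tentSum (2 * n) = n ^ 2 := by
  induction n with
  | zero => decide
  | succ n ih =>
    rw [mul_add_one, tentSum_add_two, ih]
    ring

section Paths

variable {s : ℕ}

lemma MStep.abs_h_le (a : MStep s) : |a.h| ≤ 1 := by
  cases a <;> simp [MStep.h]

lemma height_succ (x : List (MStep s)) (j : ℕ) :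
    height x (j + 1) = height x j + (x[j]?.map MStep.h).getD 0 := by
  unfold height
  rw [List.take_add_one, List.map_append, List.sum_append]
  cases h : x[j]? <;> simp

lemma abs_height_add_sub_le (x : List (MStep s)) (j d : ℕ) :
    |height x (j + d) - height x j| ≤ d := by
  induction d with
  | zero => simp
  | succ d ih =>
    have hstep : |(x[j + d]?.map MStep.h).getD 0| ≤ 1 := by
      cases x[j + d]? with
      | none => simp
      | some a => exact a.abs_h_le
    rw [← add_assoc, height_succ]
    push_cast
    calc _ = |(height x (j + d) - height x j) + (x[j + d]?.map MStep.h).getD 0| := by ring_nf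
      _ ≤ _ := (abs_add_le _ _).trans (add_le_add ih hstep)

lemma height_add_le_min (x : List (MStep s)) {a m j : ℕ} (hj : j ≤ m)
    (ha : height x a = 0) (hm : height x (a + m) = 0) :
    height x (a + j) ≤ min j (m - j) := by
  have h₁ := abs_height_add_sub_le x a j
  have h₂ := abs_height_add_sub_le x (a + j) (m - j)
  rw [add_assoc, Nat.add_sub_cancel' hj, hm] at h₂
  rw [ha] at h₁
  push_cast [hj]
  rw [abs_le] at h₁ h₂
  omega

lemma sum_height_add_le_tentSum (x : List (MStep s)) {a m : ℕ}
    (ha : height x a = 0) (hm : height x (a + m) = 0) :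
    ∑ j ∈ Finset.range (m + 1), height x (a + j) ≤ tentSum m := by
  rw [tentSum, Nat.cast_sum]
  exact Finset.sum_le_sum fun j hj =>
    height_add_le_min x (Nat.lt_succ_iff.mp (Finset.mem_range.mp hj)) ha hm

lemma sum_map_h_of_isMotzkinAux (x : List (MStep s)) :
    ∀ st, isMotzkinAux st x → (x.map MStep.h).sum = -(st.length : ℤ) := by
  induction x with
  | nil => intro st h; simp only [isMotzkinAux] at h; simp [h]
  | cons a rest ih =>
    intro st h
    cases a with
    | up c =>
      simp only [isMotzkinAux] at h
      simp only [List.map_cons, List.sum_cons, ih _ h, MStep.h, List.length_cons]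
      push_cast; ring
    | flat =>
      simp only [isMotzkinAux] at h
      simp [MStep.h, ih _ h]
    | down c' =>
      cases st with
      | nil => simp [isMotzkinAux] at h
      | cons c st' =>
        simp only [isMotzkinAux] at h
        simp only [List.map_cons, List.sum_cons, ih _ h.2, MStep.h, List.length_cons]
        push_cast; ring

lemma height_length_of_isMotzkin {x : List (MStep s)} (hx : isMotzkin x) :
    height x x.length = 0 := by
  simpa [height] using sum_map_h_of_isMotzkinAux x [] hx

lemma area2_eq_two_mul_sum_height {x : List (MStep s)} (hx : height x x.length = 0) :
    area2 x = 2 * ∑ j ∈ Finset.range (x.length + 1), height x j := by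
  have h0 : height x 0 = 0 := rfl
  have hlast := Finset.sum_range_succ (fun j => height x j) x.length
  have hfirst := Finset.sum_range_succ' (fun j => height x j) x.length
  rw [hx] at hlast
  rw [h0] at hfirst
  rw [area2, Finset.sum_add_distrib]
  linarith

lemma area2_le_of_height_eq_zero {x : List (MStep s)} (hx : isMotzkin x) {m : ℕ}
    (hm : m ≤ x.length) (h0 : height x m = 0) :
    area2 x ≤ 2 * (tentSum m + tentSum (x.length - m)) := by
  have hend := height_length_of_isMotzkin hx
  have hleft : ∑ j ∈ Finset.range m, height x j ≤ tentSum m := by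
    have := sum_height_add_le_tentSum x (a := 0) (m := m) rfl (by rwa [zero_add])
    simpa [Finset.sum_range_succ, h0] using this
  have hright := sum_height_add_le_tentSum x h0 (m := x.length - m)
    (by rwa [Nat.add_sub_cancel' hm])
  rw [area2_eq_two_mul_sum_height hend, show x.length + 1 = m + (x.length - m + 1) by omega,
    Finset.sum_range_add]
  linarith

lemma area2_le_of_mem_bottleneck {n : ℕ} (hn : 1 ≤ n) {x : List (MStep s)}
    (hx : x ∈ bottleneck s n ∩ Omega s n) : area2 x ≤ n ^ 2 + 1 := by
  obtain ⟨hB, hM, hlen⟩ := hx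
  obtain ⟨k, rfl⟩ : ∃ k, n = k + 1 := ⟨n - 1, by omega⟩
  have hk : 4 * (tentSum k : ℤ) ≤ (k : ℤ) ^ 2 := mod_cast four_mul_tentSum_le k
  have hk2 : 4 * (tentSum (k + 2) : ℤ) ≤ ((k : ℤ) + 2) ^ 2 :=
    mod_cast four_mul_tentSum_le (k + 2)
  rcases hB with ⟨_, _, h0⟩ | ⟨_, _, h0⟩
  · have harea := area2_le_of_height_eq_zero hM (m := k) (by omega) (by simpa using h0)
    rw [hlen, show 2 * (k + 1) - k = k + 2 by omega] at harea
    push_cast at harea ⊢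
    linarith
  · have harea := area2_le_of_height_eq_zero hM (m := k + 2) (by omega) h0
    rw [hlen, show 2 * (k + 1) - (k + 2) = k by omega] at harea
    push_cast at harea ⊢
    linarith

def peak (c : Fin s) (n : ℕ) : List (MStep s) :=
  List.replicate n (MStep.up c) ++ List.replicate n (MStep.down c)

lemma isMotzkinAux_replicate_up_append (c : Fin s) (n : ℕ) (st : List (Fin s))
    (rest : List (MStep s)) (h : isMotzkinAux (List.replicate n c ++ st) rest) :
    isMotzkinAux st (List.replicate n (MStep.up c) ++ rest) := by
  induction n generalizing st with
  | zero => simpa using h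
  | succ n ih =>
    rw [List.replicate_succ, List.cons_append, isMotzkinAux]
    exact ih (c :: st) (by rwa [List.replicate_succ', List.append_assoc] at h)

lemma isMotzkinAux_replicate_down (c : Fin s) (n : ℕ) :
    isMotzkinAux (List.replicate n c) (List.replicate n (MStep.down c)) := by
  induction n with
  | zero => rfl
  | succ n ih => exact ⟨rfl, ih⟩

lemma peak_mem_Omega (c : Fin s) (n : ℕ) : peak c n ∈ Omega s n := by
  refine ⟨isMotzkinAux_replicate_up_append c n [] _ ?_, by simp [peak, two_mul]⟩
  simpa using isMotzkinAux_replicate_down c n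

lemma height_peak (c : Fin s) (n : ℕ) {j : ℕ} (hj : j ≤ 2 * n) :
    height (peak c n) j = (min j (2 * n - j) : ℕ) := by
  simp only [height, peak, List.take_append, List.length_replicate, List.take_replicate,
    List.map_append, List.map_replicate, List.sum_append, List.sum_replicate, MStep.h,
    nsmul_eq_mul, mul_one, mul_neg_one]
  omega

lemma area2_peak (c : Fin s) (n : ℕ) : area2 (peak c n) = 2 * n ^ 2 := by
  have hlen : (peak c n).length = 2 * n := (peak_mem_Omega c n).2
  rw [area2_eq_two_mul_sum_height (height_length_of_isMotzkin (peak_mem_Omega c n).1), hlen,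
    Finset.sum_congr rfl fun j hj => height_peak c n (Nat.lt_succ_iff.mp (Finset.mem_range.mp hj)),
    ← Nat.cast_sum]
  exact_mod_cast congrArg (2 * ·) (tentSum_two_mul n)

end Paths

def MStep.equivSum (s : ℕ) : MStep s ≃ Fin s ⊕ Unit ⊕ Fin s where
  toFun
    | .up c => .inl c
    | .flat => .inr (.inl ())
    | .down c => .inr (.inr c)
  invFun
    | .inl c => .up c
    | .inr (.inl _) => .flat
    | .inr (.inr c) => .down c
  left_inv x := by cases x <;> rfl
  right_inv y := by rcases y with _ | _ | _ <;> rfl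

instance (s : ℕ) : Fintype (MStep s) := Fintype.ofEquiv _ (MStep.equivSum s).symm

lemma MStep.card (s : ℕ) : Fintype.card (MStep s) = 2 * s + 1 := by
  rw [Fintype.card_congr (MStep.equivSum s)]
  simp only [Fintype.card_sum, Fintype.card_fin, Fintype.card_unit]
  ring

lemma Omega_finite (s n : ℕ) : (Omega s n).Finite :=
  (List.finite_length_eq (MStep s) (2 * n)).subset fun _ hx => hx.2

lemma ncard_Omega_le (s n : ℕ) : (Omega s n).ncard ≤ (2 * s + 1) ^ (2 * n) := by
  calc (Omega s n).ncard ≤ {x : List (MStep s) | x.length = 2 * n}.ncard :=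
        Set.ncard_le_ncard (fun _ hx => hx.2) (List.finite_length_eq _ _)
    _ = Nat.card (List.Vector (MStep s) (2 * n)) := rfl
    _ = (2 * s + 1) ^ (2 * n) := by rw [Nat.card_eq_fintype_card, card_vector, MStep.card]

section Finsum

variable {α M : Type*} [AddCommMonoid M] [PartialOrder M] [IsOrderedAddMonoid M] {S : Set α}
  {f : α → M}

lemma finsum_mem_le_ncard_nsmul (hS : S.Finite) {a : M} (h : ∀ x ∈ S, f x ≤ a) :
    ∑ᶠ x ∈ S, f x ≤ S.ncard • a := by
  rw [finsum_mem_eq_finite_toFinset_sum f hS, Set.ncard_eq_toFinset_card S hS]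
  exact Finset.sum_le_card_nsmul _ _ _ fun x hx => h x (hS.mem_toFinset.mp hx)

lemma le_finsum_mem (hS : S.Finite) (hf : ∀ x ∈ S, 0 ≤ f x) {x : α} (hx : x ∈ S) :
    f x ≤ ∑ᶠ y ∈ S, f y := by
  rw [finsum_mem_eq_finite_toFinset_sum f hS]
  exact Finset.single_le_sum (fun y hy => hf y (hS.mem_toFinset.mp hy)) (hS.mem_toFinset.mpr hx)

end Finsum

lemma piOf_le {s n : ℕ} {t : ℝ} (ht : 1 ≤ t) {S : Set (List (MStep s))} {a : ℤ}
    (hS : ∀ x ∈ S ∩ Omega s n, area2 x ≤ a) {x₀ : List (MStep s)} (hx₀ : x₀ ∈ Omega s n) :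
    piOf s n t S ≤ (2 * s + 1) ^ (2 * n) * t ^ (a - area2 x₀) := by
  have ht₀ : 0 < t := one_pos.trans_le ht
  have hfin := Omega_finite s n
  have hnum : ∑ᶠ x ∈ S ∩ Omega s n, t ^ area2 x ≤ (2 * s + 1) ^ (2 * n) * t ^ a := by
    calc ∑ᶠ x ∈ S ∩ Omega s n, t ^ area2 x ≤ (S ∩ Omega s n).ncard • t ^ a :=
          finsum_mem_le_ncard_nsmul (hfin.subset Set.inter_subset_right)
            fun x hx => zpow_le_zpow_right₀ ht (hS x hx)
      _ ≤ (Omega s n).ncard • t ^ a :=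
          nsmul_le_nsmul_left (zpow_pos ht₀ a).le (Set.ncard_le_ncard Set.inter_subset_right hfin)
      _ ≤ (2 * s + 1) ^ (2 * n) * t ^ a := by
          rw [nsmul_eq_mul]
          gcongr
          exact_mod_cast ncard_Omega_le s n
  have hden : t ^ area2 x₀ ≤ ∑ᶠ x ∈ Omega s n, t ^ area2 x :=
    le_finsum_mem hfin (fun x _ => (zpow_pos ht₀ _).le) hx₀
  calc piOf s n t S ≤ (2 * s + 1) ^ (2 * n) * t ^ a / t ^ area2 x₀ :=
        div_le_div₀ (by positivity) hnum (zpow_pos ht₀ _) hden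
    _ = (2 * s + 1) ^ (2 * n) * t ^ (a - area2 x₀) := by
        rw [zpow_sub₀ ht₀.ne', mul_div_assoc]

lemma exists_pow_mul_rpow_lt {C t : ℝ} (hC : 0 < C) (ht : 1 < t) :
    ∃ N : ℕ, ∀ n ≥ N, C ^ (2 * n) * t ^ (1 - (n : ℝ) ^ 2) < t ^ (-(n : ℝ) ^ 2 / 3) := by
  have ht₀ : 0 < t := one_pos.trans ht
  -- With C = t^c the claim reads 2cn + 1 - n² < -n²/3.
  set c := Real.logb t C
  refine ⟨⌈3 * (|c| + 1)⌉₊, fun n hn => ?_⟩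
  have hn' : 3 * (|c| + 1) ≤ n := Nat.ceil_le.mp hn
  have hpow : C ^ (2 * n) = t ^ (c * (2 * n : ℕ)) := by
    rw [Real.rpow_mul ht₀.le, Real.rpow_logb ht₀ ht.ne' hC, Real.rpow_natCast]
  rw [hpow, ← Real.rpow_add ht₀, Real.rpow_lt_rpow_left_iff ht]
  push_cast
  nlinarith [le_abs_self c, abs_nonneg c]

/-- For t > 1 and all sufficiently large n, π(B) < t^(-n²/3). -/
theorem stmt10 (s : ℕ) (hs : 1 ≤ s) (t : ℝ) (ht : 1 < t) :
    ∃ N : ℕ, ∀ n ≥ N, piOf s n t (bottleneck s n) < t ^ (-(n : ℝ) ^ 2 / 3) := by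
  obtain ⟨N, hN⟩ := exists_pow_mul_rpow_lt (C := 2 * s + 1) (by positivity) ht
  refine ⟨max N 1, fun n hn => ?_⟩
  have hpeak := peak_mem_Omega (⟨0, hs⟩ : Fin s) n
  calc piOf s n t (bottleneck s n)
      ≤ (2 * s + 1) ^ (2 * n) * t ^ ((n : ℤ) ^ 2 + 1 - area2 (peak ⟨0, hs⟩ n)) :=
        piOf_le ht.le (fun x hx => area2_le_of_mem_bottleneck (le_of_max_le_right hn) hx) hpeak
    _ = (2 * s + 1) ^ (2 * n) * t ^ (1 - (n : ℝ) ^ 2) := by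
        rw [area2_peak, ← Real.rpow_intCast]
        push_cast
        ring_nf
    _ < t ^ (-(n : ℝ) ^ 2 / 3) := hN n (le_of_max_le_left hn)
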